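/- arXiv:1711.03060 — 5 statements merged into one kernel-verified Lean document; each statement's English description precedes it below -/
import Mathlib

section
/- Let γ > 1/2, s₀ > 0 and λ ∈ ℂ. Suppose f : [s₀,∞) → ℂ is twice continuously differentiable, not identically zero, satisfies −f''(s) + (γ(γ+1)/s² + i s) f(s) = λ f(s) for all s ≥ s₀, f(s₀) = 0, ∫_{s₀}^∞ (1+s)|f(s)|² ds < ∞, ∫_{s₀}^∞ |f'(s)|² ds < ∞, and f'(s)·conj(f(s)) → 0 as s → ∞. Then Re λ + Im λ ≥ min_{s>0} ( s + γ(γ+1)/s² ). In particular, if |λ| is smaller than half of this minimum, no such solution can vanish at any point where it is defined. -/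
/-!
Multiplying the equation by `conj f` and integrating by parts over `(s₀, ∞)` (the boundary
terms vanish because `f s₀ = 0` and `f' conj f → 0`) gives
`∫ (γ(γ+1)/s² + i s - λ) |f|² + |f'|² = 0`. The sum of its real and imaginary parts reads
`∫ (s + γ(γ+1)/s² - Re λ - Im λ) |f|² = -∫ |f'|² ≤ 0`, while the potential `s + γ(γ+1)/s²` is
bounded below by its minimum `m` and `∫ |f|² > 0`; hence `m ≤ Re λ + Im λ ≤ 2 |λ|`.
-/

open MeasureTheory Set Filter Topology Complex ComplexConjugate

theorem setIntegral_pos_of_continuousOn {X : Type*} [TopologicalSpace X] [MeasurableSpace X]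
    [OpensMeasurableSpace X] {μ : Measure X} [μ.IsOpenPosMeasure] {f : X → ℝ} {U : Set X} {x : X}
    (hU : IsOpen U) (hf : ContinuousOn f U) (hint : IntegrableOn f U μ) (hf0 : ∀ y ∈ U, 0 ≤ f y)
    (hx : x ∈ U) (hfx : f x ≠ 0) : 0 < ∫ y in U, f y ∂μ := by
  rw [setIntegral_pos_iff_support_of_nonneg_ae (ae_restrict_of_forall_mem hU.measurableSet hf0)
    hint]
  exact (IsOpen.measure_pos μ (hf.isOpen_inter_preimage hU isOpen_ne) ⟨x, hx, hfx⟩).trans_le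
    (measure_mono fun y hy => ⟨hy.2, hy.1⟩)

theorem integral_complex_re_add_im {X : Type*} [MeasurableSpace X] {μ : Measure X} {f : X → ℂ}
    (hf : Integrable f μ) :
    ∫ x, ((f x).re + (f x).im) ∂μ = (∫ x, f x ∂μ).re + (∫ x, f x ∂μ).im := by
  have hre : Integrable (fun x => (f x).re) μ := hf.re
  have him : Integrable (fun x => (f x).im) μ := hf.im
  rw [integral_add hre him]
  exact congrArg₂ (· + ·) (integral_re hf) (integral_im hf)

theorem integral_Ioi_deriv_mul_conj_add_mul_conj_eq_zero {u u' u'' : ℝ → ℂ} {a : ℝ}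
    (hu : ∀ s ∈ Ici a, HasDerivWithinAt u (u' s) (Ici a) s)
    (hu' : ∀ s ∈ Ici a, HasDerivWithinAt u' (u'' s) (Ici a) s) (ha : u a = 0)
    (hint : IntegrableOn (fun s => u'' s * conj (u s) + u' s * conj (u' s)) (Ioi a))
    (hlim : Tendsto (fun s => u' s * conj (u s)) atTop (𝓝 0)) :
    ∫ s in Ioi a, (u'' s * conj (u s) + u' s * conj (u' s)) = 0 := by
  have hderiv : ∀ s ∈ Ioi a, HasDerivAt (fun s => u' s * conj (u s))
      (u'' s * conj (u s) + u' s * conj (u' s)) s := fun s hs =>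
    ((hu' s hs.out.le).hasDerivAt (Ici_mem_nhds hs)).mul
      ((hu s hs.out.le).hasDerivAt (Ici_mem_nhds hs)).star
  have hcont : ContinuousWithinAt (fun s => u' s * conj (u s)) (Ici a) a :=
    (hu' a self_mem_Ici).continuousWithinAt.mul (hu a self_mem_Ici).continuousWithinAt.star
  simp [integral_Ioi_of_hasDerivAt_of_tendsto hcont hderiv hint hlim, ha]

theorem re_add_im_mul_conj_add_mul_conj (r t : ℝ) (l z w : ℂ) :
    ((r + I * t - l) * z * conj z + w * conj w).re + ((r + I * t - l) * z * conj z + w * conj w).im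
      = (r + t - (l.re + l.im)) * ‖z‖ ^ 2 + ‖w‖ ^ 2 := by
  simp only [mul_assoc, mul_conj, normSq_eq_norm_sq, add_re, ofReal_re, add_im,
    ofReal_im, sub_re, mul_re, I_re, zero_mul, I_im, mul_zero, sub_self, add_zero,
    sub_im, mul_im, one_mul, zero_add]
  ring

theorem sInf_image_add_div_sq_le {c s : ℝ} (hc : 0 ≤ c) (hs : 0 < s) :
    sInf ((fun s : ℝ => s + c / s ^ 2) '' Ioi 0) ≤ s + c / s ^ 2 :=
  csInf_le ⟨0, by rintro _ ⟨x, hx, rfl⟩; have := hx.out; positivity⟩ ⟨s, hs, rfl⟩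

theorem integrableOn_potential_mul_conj_add_mul_conj {c s₀ : ℝ} {l : ℂ} {u u' : ℝ → ℂ}
    (hs₀ : 0 < s₀) (hu : ContinuousOn u (Ioi s₀)) (hu' : ContinuousOn u' (Ioi s₀))
    (hint : IntegrableOn (fun s => (1 + s) * ‖u s‖ ^ 2) (Ioi s₀))
    (hint' : IntegrableOn (fun s => ‖u' s‖ ^ 2) (Ioi s₀)) :
    IntegrableOn (fun s : ℝ => (((c / s ^ 2 : ℝ) : ℂ) + I * s - l) * u s * conj (u s)
      + u' s * conj (u' s)) (Ioi s₀) := by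
  set K := |c| / s₀ ^ 2 + ‖l‖ + 1
  have hcont : ContinuousOn (fun s : ℝ => (((c / s ^ 2 : ℝ) : ℂ) + I * s - l) * u s * conj (u s)
      + u' s * conj (u' s)) (Ioi s₀) := by
    have : ContinuousOn (fun s : ℝ => c / s ^ 2) (Ioi s₀) :=
      continuousOn_const.div (continuousOn_id.pow 2) fun s hs => by
        have := hs₀.trans hs.out; positivity
    fun_prop
  refine ((hint.const_mul K).add hint').mono' (hcont.aestronglyMeasurable measurableSet_Ioi)
    (ae_restrict_of_forall_mem measurableSet_Ioi fun s hsI => ?_)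
  have hs : 0 < s := hs₀.trans hsI.out
  have hV : ‖((c / s ^ 2 : ℝ) : ℂ) + I * s - l‖ ≤ K * (1 + s) := by
    calc ‖((c / s ^ 2 : ℝ) : ℂ) + I * s - l‖ ≤ ‖((c / s ^ 2 : ℝ) : ℂ)‖ + ‖I * s‖ + ‖l‖ :=
          (norm_sub_le _ _).trans (by gcongr; exact norm_add_le _ _)
      _ = |c| / s ^ 2 + s + ‖l‖ := by simp [abs_of_pos hs]
      _ ≤ K * (1 + s) := by
          have : |c| / s ^ 2 ≤ |c| / s₀ ^ 2 := by gcongr; exact hsI.out.le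
          nlinarith [norm_nonneg l, abs_nonneg c, div_nonneg (abs_nonneg c) (sq_nonneg s₀)]
  calc ‖(((c / s ^ 2 : ℝ) : ℂ) + I * s - l) * u s * conj (u s) + u' s * conj (u' s)‖
      ≤ ‖((c / s ^ 2 : ℝ) : ℂ) + I * s - l‖ * ‖u s‖ ^ 2 + ‖u' s‖ ^ 2 := by
        refine (norm_add_le _ _).trans ?_
        simp [mul_assoc, sq]
    _ ≤ K * ((1 + s) * ‖u s‖ ^ 2) + ‖u' s‖ ^ 2 := by
        rw [← mul_assoc]; gcongr

theorem sInf_image_add_div_sq_le_re_add_im {c s₀ : ℝ} {l : ℂ} {u u' : ℝ → ℂ} (hc : 0 ≤ c)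
    (hs₀ : 0 < s₀) (hu : ∀ s ∈ Ici s₀, HasDerivWithinAt u (u' s) (Ici s₀) s)
    (hu' : ∀ s ∈ Ici s₀,
      HasDerivWithinAt u' ((((c / s ^ 2 : ℝ) : ℂ) + I * s - l) * u s) (Ici s₀) s)
    (hvan : u s₀ = 0) (hne : ∃ s > s₀, u s ≠ 0)
    (hint : IntegrableOn (fun s => (1 + s) * ‖u s‖ ^ 2) (Ioi s₀))
    (hint' : IntegrableOn (fun s => ‖u' s‖ ^ 2) (Ioi s₀))
    (hlim : Tendsto (fun s => u' s * conj (u s)) atTop (𝓝 0)) :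
    sInf ((fun s : ℝ => s + c / s ^ 2) '' Ioi 0) ≤ l.re + l.im := by
  set m := sInf ((fun s : ℝ => s + c / s ^ 2) '' Ioi 0)
  have hcont {v v' : ℝ → ℂ} (hv : ∀ s ∈ Ici s₀, HasDerivWithinAt v (v' s) (Ici s₀) s) :
      ContinuousOn v (Ioi s₀) := fun s hs =>
    (hv s hs.out.le).continuousWithinAt.mono Ioi_subset_Ici_self
  have hh := integrableOn_potential_mul_conj_add_mul_conj (c := c) (l := l) hs₀ (hcont hu)
    (hcont hu') hint hint'
  have hρ : ∫ s in Ioi s₀, ((c / s ^ 2 + s - (l.re + l.im)) * ‖u s‖ ^ 2 + ‖u' s‖ ^ 2) = 0 := by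
    simp_rw [← re_add_im_mul_conj_add_mul_conj]
    rw [integral_complex_re_add_im hh,
      integral_Ioi_deriv_mul_conj_add_mul_conj_eq_zero hu hu' hvan hh hlim, zero_re, zero_im,
      add_zero]
  have hnorm : IntegrableOn (fun s => ‖u s‖ ^ 2) (Ioi s₀) :=
    hint.mono' ((hcont hu).norm.pow 2 |>.aestronglyMeasurable measurableSet_Ioi)
      (ae_restrict_of_forall_mem measurableSet_Ioi fun s hs => by
        have := hs₀.trans hs.out
        rw [Real.norm_of_nonneg (by positivity)]
        nlinarith [sq_nonneg ‖u s‖])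
  obtain ⟨s₁, hs₁, hus₁⟩ := hne
  have hN : 0 < ∫ s in Ioi s₀, ‖u s‖ ^ 2 :=
    setIntegral_pos_of_continuousOn isOpen_Ioi ((hcont hu).norm.pow 2) hnorm
      (fun _ _ => by positivity) hs₁ (by positivity)
  have hle : (m - (l.re + l.im)) * ∫ s in Ioi s₀, ‖u s‖ ^ 2 ≤ 0 := by
    rw [← integral_const_mul, ← hρ]
    refine setIntegral_mono_on (hnorm.const_mul _) ?_ measurableSet_Ioi fun s hs => ?_
    · simp_rw [← re_add_im_mul_conj_add_mul_conj]
      exact hh.re.add hh.im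
    · have := sInf_image_add_div_sq_le hc (hs₀.trans hs.out)
      nlinarith [sq_nonneg ‖u s‖, sq_nonneg ‖u' s‖]
  exact sub_nonpos.mp (nonpos_of_mul_nonpos_left hle hN)

/-- A nontrivial solution of `−f'' + (γ(γ+1)/s² + is) f = λ f` on `[s₀,∞)`
vanishing at `s₀`, square integrable with weight `(1+s)` together with its derivative, and
with `f'·conj f → 0` at infinity, forces `Re λ + Im λ ≥ min_{s>0}(s + γ(γ+1)/s²)`.
In particular no such vanishing solution exists when `|λ|` is smaller than half this minimum. -/
theorem stmt2
    (γ : ℝ) (hγ : 1 / 2 < γ) (s₀ : ℝ) (hs₀ : 0 < s₀) (l : ℂ)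
    (f : ℝ → ℂ)
    (hreg : ContDiffOn ℝ 2 f (Ici s₀))
    (hne : ¬ ∀ s ∈ Ici s₀, f s = 0)
    (hODE : ∀ s ∈ Ici s₀,
      -(derivWithin (derivWithin f (Ici s₀)) (Ici s₀) s)
        + ((γ * (γ + 1) / s ^ 2 : ℝ) + Complex.I * (s : ℂ)) * f s = l * f s)
    (hvan : f s₀ = 0)
    (hint : IntegrableOn (fun s : ℝ => (1 + s) * ‖f s‖ ^ 2) (Ici s₀))
    (hint' : IntegrableOn (fun s : ℝ => ‖derivWithin f (Ici s₀) s‖ ^ 2) (Ici s₀))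
    (hlim : Filter.Tendsto (fun s : ℝ => derivWithin f (Ici s₀) s * (starRingEnd ℂ) (f s))
      Filter.atTop (nhds 0)) :
    sInf ((fun s : ℝ => s + γ * (γ + 1) / s ^ 2) '' Ioi 0) ≤ l.re + l.im
    ∧ ¬ (‖l‖ < sInf ((fun s : ℝ => s + γ * (γ + 1) / s ^ 2) '' Ioi 0) / 2) := by
  set f' := derivWithin f (Ici s₀)
  have hf'_C1 : ContDiffOn ℝ 1 f' (Ici s₀) := hreg.derivWithin (uniqueDiffOn_Ici s₀) (by norm_num)
  have hf : ∀ s ∈ Ici s₀, HasDerivWithinAt f (f' s) (Ici s₀) s := fun s hs =>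
    (hreg.differentiableOn (by norm_num) s hs).hasDerivWithinAt
  have hf' : ∀ s ∈ Ici s₀, HasDerivWithinAt f'
      ((((γ * (γ + 1) / s ^ 2 : ℝ) : ℂ) + I * s - l) * f s) (Ici s₀) s := fun s hs => by
    refine (hf'_C1.differentiableOn one_ne_zero s hs).hasDerivWithinAt.congr_deriv ?_
    linear_combination -hODE s hs
  have hne' : ∃ s > s₀, f s ≠ 0 := by
    push Not at hne
    obtain ⟨s, hs, hfs⟩ := hne
    exact ⟨s, hs.out.lt_of_ne (by rintro rfl; exact hfs hvan), hfs⟩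
  have hmin := sInf_image_add_div_sq_le_re_add_im (by nlinarith) hs₀ hf hf' hvan hne'
    (hint.mono_set Ioi_subset_Ici_self) (hint'.mono_set Ioi_subset_Ici_self) hlim
  refine ⟨hmin, fun hlt => ?_⟩
  linarith [re_le_norm l, im_le_norm l]
end

section
/- Let α ∈ (0,2) with α ≠ 1. Define h₀ = 1, h_{n+1} = h_n/(n+1−α), F_α(z) = Σ_{n≥0} h_n zⁿ, d_n = (i/9)ⁿ h_n / n!, and D_α(x) = Σ_{n≥0} d_n xⁿ. Then D_α is an entire function, there exists C > 0 such that |D_α(x)| ≤ C e^{C√x} for all x ≥ 0, and for every t ∈ ℂ with Re t > 0 one has ∫₀^∞ e^{−x/t} D_α(x) dx = t · F_α(i t/9). -/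
open MeasureTheory Set

/-- The sequence `h₀ = 1`, `h_{n+1} = h_n / (n+1−α)`. -/
noncomputable def hseq (α : ℝ) : ℕ → ℝ
  | 0 => 1
  | (n + 1) => hseq α n / ((n : ℝ) + 1 - α)

/-- `F_α(z) = Σ h_n zⁿ`. -/
noncomputable def Fal (α : ℝ) (z : ℂ) : ℂ := ∑' n : ℕ, ((hseq α n : ℝ) : ℂ) * z ^ n

/-- `d_n = (i/9)ⁿ h_n / n!`. -/
noncomputable def dseq (α : ℝ) (n : ℕ) : ℂ :=
  (Complex.I / 9) ^ n * ((hseq α n : ℝ) : ℂ) / (n.factorial : ℂ)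

/-- `D_α(x) = Σ d_n xⁿ`. -/
noncomputable def Dal (α : ℝ) (z : ℂ) : ℂ := ∑' n : ℕ, dseq α n * z ^ n

/-!
Since `α < 2` and `α ≠ 1`, there is `c > 0` with `|n + 1 - α| ≥ c (n + 1)` for all `n`, so
`|h_n| ≤ 1 / (cⁿ n!)` and `|d_n| ≤ Aⁿ / n!²` with `A = 1 / (9c)`. With `y = √(A |z|)` this gives
`|d_n zⁿ| ≤ (yⁿ / n!)² ≤ e^y yⁿ / n!`, hence convergence on all of `ℂ` and `|D_α(z)| ≤ e^{2y}`.
The Laplace transform is computed termwise from `∫₀^∞ xⁿ e^{-x/t} dx = n! tⁿ⁺¹`; the interchange is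
legitimate because the second `n!` in the bound on `d_n` absorbs the `n!` produced by the integral,
so `Σ |d_n| n! / (Re t⁻¹)ⁿ⁺¹` converges.
-/

open Filter Nat

namespace Complex

lemma norm_ofReal_pow_mul_exp_neg_mul (b : ℂ) (n : ℕ) {x : ℝ} (hx : 0 ≤ x) :
    ‖(x : ℂ) ^ n * exp (-(b * x))‖ = x ^ n * Real.exp (-b.re * x) := by
  rw [norm_mul, norm_pow, norm_exp, norm_real, Real.norm_of_nonneg hx]
  simp

lemma integrableOn_pow_mul_exp_neg_mul_Ioi {b : ℂ} (hb : 0 < b.re) (n : ℕ) :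
    IntegrableOn (fun x : ℝ => (x : ℂ) ^ n * exp (-(b * x))) (Ioi 0) := by
  have h := integrableOn_rpow_mul_exp_neg_mul_rpow (s := n) (p := 1)
    (by linarith [n.cast_nonneg (α := ℝ)]) one_pos hb
  refine h.mono' (by fun_prop)
    ((ae_restrict_iff' measurableSet_Ioi).mpr (.of_forall fun x hx => ?_))
  rw [norm_ofReal_pow_mul_exp_neg_mul b n (le_of_lt hx), Real.rpow_natCast, Real.rpow_one]

lemma integral_pow_succ_mul_exp_neg_mul_Ioi {b : ℂ} (hb : 0 < b.re) (n : ℕ) :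
    ∫ x in Ioi (0 : ℝ), (x : ℂ) ^ (n + 1) * exp (-(b * x)) =
      (n + 1) / b * ∫ x in Ioi (0 : ℝ), (x : ℂ) ^ n * exp (-(b * x)) := by
  have hb0 : b ≠ 0 := fun h => by simp [h] at hb
  have hint := integrableOn_pow_mul_exp_neg_mul_Ioi hb
  -- integration by parts, written as the fundamental theorem of calculus for `-xⁿ⁺¹ e^{-bx} / b`
  have key := integral_Ioi_of_hasDerivAt_of_tendsto'
    (f := fun x : ℝ => -((x : ℂ) ^ (n + 1) * exp (-(b * x))) / b) (m := 0)
    (f' := fun x : ℝ =>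
      (x : ℂ) ^ (n + 1) * exp (-(b * x)) - (n + 1) / b * ((x : ℂ) ^ n * exp (-(b * x))))
    (fun x _ => ?deriv) ((hint (n + 1)).sub ((hint n).const_mul ((n + 1) / b))) ?lim
  case deriv =>
    have hpow : HasDerivAt (fun x : ℝ => (x : ℂ) ^ (n + 1)) ((n + 1 : ℂ) * (x : ℂ) ^ n) x := by
      simpa using (hasDerivAt_pow (n + 1) (x : ℂ)).comp_ofReal
    have hexp : HasDerivAt (fun x : ℝ => exp (-(b * x))) (-b * exp (-(b * x))) x := by
      simpa [mul_comm] using ((hasDerivAt_id (x : ℂ)).const_mul (-b)).cexp.comp_ofReal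
    refine ((hpow.mul hexp).neg.div_const b).congr_deriv ?_
    field_simp
    ring
  case lim =>
    rw [tendsto_zero_iff_norm_tendsto_zero]
    have h := (tendsto_rpow_mul_exp_neg_mul_atTop_nhds_zero (n + 1 : ℕ) b.re hb).div_const ‖b‖
    rw [zero_div] at h
    refine h.congr' ?_
    filter_upwards [eventually_ge_atTop 0] with x hx
    rw [norm_div, norm_neg, norm_ofReal_pow_mul_exp_neg_mul b _ hx, Real.rpow_natCast]
  rw [integral_sub (hint (n + 1)) ((hint n).const_mul _), integral_const_mul] at key
  simpa [sub_eq_zero] using key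

lemma integral_pow_mul_exp_neg_mul_Ioi {b : ℂ} (hb : 0 < b.re) (n : ℕ) :
    ∫ x in Ioi (0 : ℝ), (x : ℂ) ^ n * exp (-(b * x)) = n ! / b ^ (n + 1) := by
  have hb0 : b ≠ 0 := fun h => by simp [h] at hb
  induction n with
  | zero =>
    simpa [neg_mul, neg_div, div_neg] using integral_exp_mul_complex_Ioi (a := -b) (by simpa) 0
  | succ n ih =>
    rw [integral_pow_succ_mul_exp_neg_mul_Ioi hb, ih, factorial_succ]
    push_cast
    field_simp
    ring

end Complex

lemma integral_pow_mul_exp_neg_mul_Ioi {r : ℝ} (hr : 0 < r) (n : ℕ) :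
    ∫ x in Ioi (0 : ℝ), x ^ n * Real.exp (-r * x) = n ! / r ^ (n + 1) := by
  have h := Complex.integral_pow_mul_exp_neg_mul_Ioi (b := r) (by simpa) n
  rw [← Complex.ofReal_inj, ← integral_complex_ofReal]
  push_cast
  simpa [Complex.ofReal_exp] using h

lemma Real.hasSum_pow_div_factorial (y : ℝ) : HasSum (fun n => y ^ n / n !) (Real.exp y) := by
  rw [Real.exp_eq_exp_ℝ]; exact NormedSpace.expSeries_div_hasSum_exp y

section BorelSeries

variable {a : ℕ → ℂ} {A : ℝ}

lemma norm_mul_pow_le_of_norm_le (hA : 0 ≤ A) (ha : ∀ n, ‖a n‖ ≤ A ^ n / (n ! * n !))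
    (z : ℂ) (n : ℕ) :
    ‖a n * z ^ n‖ ≤ Real.exp √(A * ‖z‖) * (√(A * ‖z‖) ^ n / n !) := by
  set y := √(A * ‖z‖)
  have hy : y ^ n * y ^ n = A ^ n * ‖z‖ ^ n := by
    rw [← mul_pow, ← mul_pow, Real.mul_self_sqrt (by positivity)]
  calc ‖a n * z ^ n‖ ≤ A ^ n / (n ! * n !) * ‖z‖ ^ n := by
        rw [norm_mul, norm_pow]; gcongr; exact ha n
    _ = y ^ n / n ! * (y ^ n / n !) := by rw [div_mul_eq_mul_div, ← hy]; ring
    _ ≤ Real.exp y * (y ^ n / n !) := by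
        gcongr; exact Real.pow_div_factorial_le_exp _ (Real.sqrt_nonneg _) n

lemma summable_mul_pow_of_norm_le (hA : 0 ≤ A) (ha : ∀ n, ‖a n‖ ≤ A ^ n / (n ! * n !))
    (z : ℂ) : Summable fun n => a n * z ^ n :=
  .of_norm_bounded ((Real.summable_pow_div_factorial _).mul_left _)
    (norm_mul_pow_le_of_norm_le hA ha z)

lemma norm_tsum_mul_pow_le_of_norm_le (hA : 0 ≤ A) (ha : ∀ n, ‖a n‖ ≤ A ^ n / (n ! * n !))
    (z : ℂ) : ‖∑' n, a n * z ^ n‖ ≤ Real.exp (2 * √(A * ‖z‖)) := by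
  rw [two_mul, Real.exp_add]
  exact tsum_of_norm_bounded ((Real.hasSum_pow_div_factorial _).mul_left _)
    (norm_mul_pow_le_of_norm_le hA ha z)

lemma integral_exp_neg_div_mul_tsum_of_norm_le (ha : ∀ n, ‖a n‖ ≤ A ^ n / (n ! * n !))
    {t : ℂ} (ht : 0 < t.re) :
    ∫ x in Ioi (0 : ℝ), Complex.exp (-(x : ℂ) / t) * ∑' n, a n * (x : ℂ) ^ n =
      ∑' n, a n * n ! * t ^ (n + 1) := by
  have ht0 : t ≠ 0 := by rintro rfl; simp at ht
  have hr : 0 < t⁻¹.re := by rw [Complex.inv_re]; exact div_pos ht (Complex.normSq_pos.mpr ht0)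
  set r := t⁻¹.re
  set F : ℕ → ℝ → ℂ := fun n x => a n * ((x : ℂ) ^ n * Complex.exp (-(t⁻¹ * x)))
  have hF : ∀ x : ℝ, Complex.exp (-(x : ℂ) / t) * ∑' n, a n * (x : ℂ) ^ n = ∑' n, F n x := by
    intro x
    rw [← tsum_mul_left, neg_div, div_eq_inv_mul]
    exact tsum_congr fun n => by simp only [F]; ring
  have hF_int (n : ℕ) : ∫ x in Ioi (0 : ℝ), F n x = a n * n ! * t ^ (n + 1) := by
    simp only [F]
    rw [integral_const_mul, Complex.integral_pow_mul_exp_neg_mul_Ioi hr, inv_pow, div_inv_eq_mul,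
      mul_assoc]
  have hF_norm (n : ℕ) : ∫ x in Ioi (0 : ℝ), ‖F n x‖ = ‖a n‖ * (n ! / r ^ (n + 1)) := by
    rw [← integral_pow_mul_exp_neg_mul_Ioi hr, ← integral_const_mul]
    refine setIntegral_congr_fun measurableSet_Ioi fun x hx => ?_
    simp only [F]
    rw [norm_mul, Complex.norm_ofReal_pow_mul_exp_neg_mul _ _ (le_of_lt hx)]
  have hF_summable : Summable fun n => ∫ x in Ioi (0 : ℝ), ‖F n x‖ := by
    refine .of_nonneg_of_le (fun n => integral_nonneg fun x => norm_nonneg _) (fun n => ?_)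
      ((Real.summable_pow_div_factorial (A / r)).mul_left r⁻¹)
    calc ∫ x in Ioi (0 : ℝ), ‖F n x‖ ≤ A ^ n / (n ! * n !) * (n ! / r ^ (n + 1)) := by
          rw [hF_norm]; gcongr; exact ha n
      _ = r⁻¹ * ((A / r) ^ n / n !) := by rw [div_pow, pow_succ]; field_simp
  rw [integral_congr_ae (.of_forall hF), ← integral_tsum_of_summable_integral_norm
    (fun n => (Complex.integrableOn_pow_mul_exp_neg_mul_Ioi hr n).const_mul _) hF_summable]
  exact tsum_congr hF_int

lemma exists_norm_tsum_mul_pow_le_exp_sqrt (hA : 0 ≤ A)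
    (ha : ∀ n, ‖a n‖ ≤ A ^ n / (n ! * n !)) :
    ∃ C : ℝ, 0 < C ∧ ∀ x : ℝ, 0 ≤ x →
      ‖∑' n, a n * (x : ℂ) ^ n‖ ≤ C * Real.exp (C * √x) := by
  set C := max 1 (2 * √A)
  refine ⟨C, by positivity, fun x hx => ?_⟩
  calc ‖∑' n, a n * (x : ℂ) ^ n‖ ≤ Real.exp (2 * √(A * ‖(x : ℂ)‖)) :=
        norm_tsum_mul_pow_le_of_norm_le hA ha x
    _ = Real.exp (2 * √A * √x) := by
        rw [Complex.norm_real, Real.norm_of_nonneg hx, Real.sqrt_mul hA, mul_assoc]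
    _ ≤ Real.exp (C * √x) := by gcongr; exact le_max_right _ _
    _ ≤ C * Real.exp (C * √x) := le_mul_of_one_le_left (Real.exp_pos _).le (le_max_left _ _)

end BorelSeries

lemma exists_pos_mul_le_abs_natCast_add_one_sub {α : ℝ} (hα2 : α < 2) (hα1 : α ≠ 1) :
    ∃ c > 0, ∀ n : ℕ, c * (n + 1) ≤ |n + 1 - α| := by
  set c := min |1 - α| (min ((2 - α) / 2) (1 / 2))
  have hc₁ : c ≤ |1 - α| := min_le_left _ _
  have hc₂ : c ≤ (2 - α) / 2 := (min_le_right _ _).trans (min_le_left _ _)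
  have hc₃ : c ≤ 1 / 2 := (min_le_right _ _).trans (min_le_right _ _)
  refine ⟨c, lt_min (abs_pos.mpr (sub_ne_zero.mpr hα1.symm)) (lt_min (by linarith) (by norm_num)),
    fun n => ?_⟩
  rcases n with _ | m
  · simpa using hc₁
  · -- `c (m + 2) = 2c + c m ≤ (2 - α) + m`
    refine le_trans ?_ (le_abs_self _)
    push_cast
    nlinarith [m.cast_nonneg (α := ℝ)]

lemma abs_hseq_le {α c : ℝ} (hc : 0 < c) (hα : ∀ n : ℕ, c * (n + 1) ≤ |n + 1 - α|) (n : ℕ) :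
    |hseq α n| ≤ (c ^ n * n !)⁻¹ := by
  induction n with
  | zero => simp [hseq]
  | succ n ih =>
    have hpos : 0 < c * (n + 1) := by positivity
    rw [hseq, abs_div, factorial_succ, pow_succ]
    push_cast
    calc |hseq α n| / |n + 1 - α| ≤ (c ^ n * n !)⁻¹ / (c * (n + 1)) :=
          div_le_div₀ (by positivity) ih hpos (hα n)
      _ = (c ^ n * c * ((n + 1) * n !))⁻¹ := by field_simp

lemma norm_dseq_le {α c : ℝ} (hc : 0 < c) (hα : ∀ n : ℕ, c * (n + 1) ≤ |n + 1 - α|) (n : ℕ) :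
    ‖dseq α n‖ ≤ (9 * c)⁻¹ ^ n / (n ! * n !) := by
  have hnorm : ‖dseq α n‖ = 9⁻¹ ^ n * |hseq α n| / n ! := by
    simp [dseq]
  calc ‖dseq α n‖ ≤ 9⁻¹ ^ n * (c ^ n * n !)⁻¹ / n ! := by
        rw [hnorm]; gcongr; exact abs_hseq_le hc hα n
    _ = (9 * c)⁻¹ ^ n / (n ! * n !) := by
        rw [inv_pow, inv_pow, mul_pow]
        field_simp

lemma dseq_mul_factorial_mul_pow_succ (α : ℝ) (t : ℂ) (n : ℕ) :
    dseq α n * n ! * t ^ (n + 1) = t * ((hseq α n : ℂ) * (Complex.I * t / 9) ^ n) := by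
  have hn : (n ! : ℂ) ≠ 0 := Nat.cast_ne_zero.mpr n.factorial_ne_zero
  simp only [dseq]
  field_simp
  ring

/-- `D_α` is entire, `|D_α(x)| ≤ C e^{C√x}` on `[0,∞)`, and for
`Re t > 0` one has `∫₀^∞ e^{−x/t} D_α(x) dx = t · F_α(i t / 9)`. -/
theorem stmt4
    (α : ℝ) (hα : α ∈ Ioo (0 : ℝ) 2) (hα1 : α ≠ 1) :
    (∀ z : ℂ, Summable (fun n : ℕ => dseq α n * z ^ n))
    ∧ (∃ C : ℝ, 0 < C ∧ ∀ x : ℝ, 0 ≤ x →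
        ‖Dal α (x : ℂ)‖ ≤ C * Real.exp (C * Real.sqrt x))
    ∧ (∀ t : ℂ, 0 < t.re →
        (∫ x in Ioi (0 : ℝ), Complex.exp (-(x : ℂ) / t) * Dal α (x : ℂ))
          = t * Fal α (Complex.I * t / 9)) := by
  obtain ⟨c, hc, hcα⟩ := exists_pos_mul_le_abs_natCast_add_one_sub hα.2 hα1
  have hd := norm_dseq_le hc hcα
  have hA : 0 ≤ (9 * c)⁻¹ := by positivity
  refine ⟨summable_mul_pow_of_norm_le hA hd, exists_norm_tsum_mul_pow_le_exp_sqrt hA hd,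
    fun t ht => ?_⟩
  simp only [Dal, Fal]
  rw [integral_exp_neg_div_mul_tsum_of_norm_le hd ht, ← tsum_mul_left]
  exact tsum_congr (dseq_mul_factorial_mul_pow_succ α t)
end

section
/- Let γ > 1/2, W(v) = γ((γ+1)v² − 1)/(1+v²)², M(v) = (1+v²)^{−γ/2}, and let η > 0 and λ ∈ ℂ. Suppose G : [0,∞) → ℂ is twice continuously differentiable, bounded with bounded derivative, satisfies −G''(v) + W(v) G(v) + i η v G(v) = λ η^{2/3} G(v) for all v ≥ 0, G(v) → 0 and G'(v) → 0 as v → ∞, and ∫₀^∞ (1+v) |G(v)| M(v) dv < ∞. Then G'(0) = η^{2/3} ∫₀^∞ (λ − i η^{1/3} v) G(v) M(v) dv. -/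
/-!
With `M` the positive solution of `-M'' + W M = 0`, the Wronskian-type flux
`F = G' M - M' G` has `F' = G'' M - M'' G = (iηv - λη^{2/3}) G M` by the two equations.
Since `M(0) = 1`, `M'(0) = 0` and `F → 0` at infinity, integrating `F'` over `(0, ∞)`
gives `-G'(0)`.
-/

open MeasureTheory Set Filter Topology

noncomputable section

def groundState (γ v : ℝ) : ℝ := (1 + v ^ 2) ^ (-γ / 2)

def groundStateDeriv (γ v : ℝ) : ℝ := -γ * v / (1 + v ^ 2) * groundState γ v

lemma one_add_sq_pos (v : ℝ) : 0 < 1 + v ^ 2 := by positivity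

lemma hasDerivAt_one_add_sq (v : ℝ) : HasDerivAt (fun v : ℝ => 1 + v ^ 2) (2 * v) v := by
  simpa using (hasDerivAt_pow 2 v).const_add 1

section groundState

variable (γ : ℝ)

lemma groundState_nonneg (v : ℝ) : 0 ≤ groundState γ v :=
  Real.rpow_nonneg (one_add_sq_pos v).le _

@[simp] lemma groundState_zero : groundState γ 0 = 1 := by simp [groundState]

@[simp] lemma groundStateDeriv_zero : groundStateDeriv γ 0 = 0 := by simp [groundStateDeriv]

lemma hasDerivAt_groundState (v : ℝ) : HasDerivAt (groundState γ) (groundStateDeriv γ v) v := by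
  refine ((hasDerivAt_one_add_sq v).rpow_const (p := -γ / 2)
    (Or.inl (one_add_sq_pos v).ne')).congr_deriv ?_
  rw [groundStateDeriv, groundState, Real.rpow_sub_one (one_add_sq_pos v).ne']
  ring

lemma hasDerivAt_groundStateDeriv (v : ℝ) :
    HasDerivAt (groundStateDeriv γ)
      (γ * ((γ + 1) * v ^ 2 - 1) / (1 + v ^ 2) ^ 2 * groundState γ v) v := by
  have hquot : HasDerivAt (fun v : ℝ => -γ * v / (1 + v ^ 2))
      ((-γ * 1 * (1 + v ^ 2) - -γ * v * (2 * v)) / (1 + v ^ 2) ^ 2) v :=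
    ((hasDerivAt_id' v).const_mul (-γ)).div (hasDerivAt_one_add_sq v) (one_add_sq_pos v).ne'
  refine (hquot.mul (hasDerivAt_groundState γ v)).congr_deriv ?_
  rw [groundStateDeriv]
  field_simp
  ring

lemma continuous_groundState : Continuous (groundState γ) :=
  continuous_iff_continuousAt.mpr fun v => (hasDerivAt_groundState γ v).continuousAt

variable {γ}

lemma tendsto_groundState_atTop (hγ : 0 < γ) : Tendsto (groundState γ) atTop (𝓝 0) := by
  have h1 : Tendsto (fun v : ℝ => 1 + v ^ 2) atTop atTop :=
    tendsto_atTop_add_const_left _ _ (tendsto_pow_atTop two_ne_zero)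
  show Tendsto (fun v : ℝ => (1 + v ^ 2) ^ (-γ / 2)) atTop (𝓝 0)
  rw [neg_div]
  exact (tendsto_rpow_neg_atTop (half_pos hγ)).comp h1

lemma tendsto_groundStateDeriv_atTop (hγ : 0 < γ) :
    Tendsto (groundStateDeriv γ) atTop (𝓝 0) := by
  -- `|v| ≤ 1 + v²` keeps the rational factor bounded by `γ`
  have hbdd : IsBoundedUnder (· ≤ ·) atTop (fun v : ℝ => ‖-γ * v / (1 + v ^ 2)‖) := by
    refine isBoundedUnder_of ⟨γ, fun v => ?_⟩
    rw [norm_div, norm_mul, norm_neg, Real.norm_of_nonneg hγ.le,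
      Real.norm_of_nonneg (one_add_sq_pos v).le, div_le_iff₀ (one_add_sq_pos v)]
    have : ‖v‖ ≤ 1 + v ^ 2 := by
      rw [Real.norm_eq_abs]; nlinarith [abs_nonneg v, sq_abs v, sq_nonneg (|v| - 1)]
    nlinarith
  have h := (tendsto_groundState_atTop hγ).zero_mul_isBoundedUnder_le hbdd
  simp only [mul_comm (groundState γ _)] at h
  exact h

end groundState

lemma hasDerivAt_flux {G G' : ℝ → ℂ} {M M' : ℝ → ℝ} {G'' : ℂ} {M'' x : ℝ}
    (hG : HasDerivAt G (G' x) x) (hG' : HasDerivAt G' G'' x)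
    (hM : HasDerivAt M (M' x) x) (hM' : HasDerivAt M' M'' x) :
    HasDerivAt (fun v => G' v * M v - M' v * G v) (G'' * M x - M'' * G x) x :=
  ((hG'.mul hM.ofReal_comp).sub (hM'.ofReal_comp.mul hG)).congr_deriv (by ring)

lemma hasDerivAt_derivWithin_Ici {E : Type*} [NormedAddCommGroup E] [NormedSpace ℝ E]
    {f : ℝ → E} {a x : ℝ} (hf : DifferentiableOn ℝ f (Ici a)) (hx : a < x) :
    HasDerivAt f (derivWithin f (Ici a) x) x :=
  (hf x hx.le).hasDerivWithinAt.hasDerivAt (Ici_mem_nhds hx)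

lemma integrableOn_Ioi_affine_mul {G : ℝ → ℂ} {M : ℝ → ℝ} (a b : ℂ)
    (hG : ContinuousOn G (Ioi 0)) (hM : ContinuousOn M (Ioi 0)) (hM0 : ∀ v, 0 ≤ M v)
    (hint : IntegrableOn (fun v : ℝ => (1 + v) * ‖G v‖ * M v) (Ioi 0)) :
    IntegrableOn (fun v : ℝ => (a - b * v) * G v * M v) (Ioi 0) := by
  have hcont : ContinuousOn (fun v : ℝ => (a - b * v) * G v * M v) (Ioi 0) := by fun_prop
  refine Integrable.mono' (hint.const_mul (‖a‖ + ‖b‖))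
    (hcont.aestronglyMeasurable measurableSet_Ioi) ?_
  filter_upwards [ae_restrict_mem measurableSet_Ioi] with v (hv : 0 < v)
  have haffine : ‖a - b * v‖ ≤ (‖a‖ + ‖b‖) * (1 + v) := by
    calc ‖a - b * v‖ ≤ ‖a‖ + ‖b‖ * v := by
          simpa [Complex.norm_real, abs_of_pos hv] using norm_sub_le a (b * v)
      _ ≤ (‖a‖ + ‖b‖) * (1 + v) := by nlinarith [norm_nonneg a, norm_nonneg b]
  calc ‖(a - b * v) * G v * M v‖ = ‖a - b * v‖ * (‖G v‖ * M v) := by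
        rw [norm_mul, norm_mul, Complex.norm_real, Real.norm_of_nonneg (hM0 v), mul_assoc]
    _ ≤ (‖a‖ + ‖b‖) * (1 + v) * (‖G v‖ * M v) :=
        mul_le_mul_of_nonneg_right haffine (by positivity [hM0 v])
    _ = (‖a‖ + ‖b‖) * ((1 + v) * ‖G v‖ * M v) := by ring

/-- The flux `G' M - M' G` has derivative `f M` on `(0, ∞)`. -/
lemma derivWithin_Ici_zero_eq_neg_integral {G f : ℝ → ℂ} {M M' W : ℝ → ℝ}
    (hG : ContDiffOn ℝ 2 G (Ici 0))
    (hM : ∀ v, HasDerivAt M (M' v) v) (hM' : ∀ v, HasDerivAt M' (W v * M v) v)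
    (hM0 : M 0 = 1) (hM'0 : M' 0 = 0)
    (hODE : ∀ v, 0 < v → derivWithin (derivWithin G (Ici 0)) (Ici 0) v = W v * G v + f v)
    (hf : IntegrableOn (fun v => f v * M v) (Ioi 0))
    (hlim : Tendsto (fun v => derivWithin G (Ici 0) v * M v - M' v * G v) atTop (𝓝 0)) :
    derivWithin G (Ici 0) 0 = -∫ v in Ioi 0, f v * M v := by
  set G' := derivWithin G (Ici 0)
  have hG' : ContDiffOn ℝ 1 G' (Ici 0) := hG.derivWithin (uniqueDiffOn_Ici 0) le_rfl
  have hflux : ∀ x ∈ Ioi (0 : ℝ),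
      HasDerivAt (fun v => G' v * M v - M' v * G v) (f x * M x) x := by
    intro x (hx : 0 < x)
    refine (hasDerivAt_flux (hasDerivAt_derivWithin_Ici (hG.differentiableOn two_ne_zero) hx)
      (hasDerivAt_derivWithin_Ici (hG'.differentiableOn one_ne_zero) hx) (hM x)
      (hM' x)).congr_deriv ?_
    rw [hODE x hx]
    push_cast
    ring
  have hcont : ContinuousWithinAt (fun v => G' v * M v - M' v * G v) (Ici 0) 0 := by
    have hMc : Continuous M := continuous_iff_continuousAt.mpr fun v => (hM v).continuousAt
    have hM'c : Continuous M' := continuous_iff_continuousAt.mpr fun v => (hM' v).continuousAt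
    have hGc := hG.continuousOn
    have hG'c := hG'.continuousOn
    exact ContinuousOn.continuousWithinAt (by fun_prop) self_mem_Ici
  have hFTC := integral_Ioi_of_hasDerivAt_of_tendsto hcont hflux hf hlim
  simp only [hM0, hM'0, Complex.ofReal_one, Complex.ofReal_zero, mul_one, zero_mul, sub_zero,
    zero_sub] at hFTC
  rw [hFTC, neg_neg]

end

theorem stmt11_general
    (γ : ℝ) (hγ : 1 / 2 < γ)
    (W : ℝ → ℝ) (hW : ∀ v, W v = γ * ((γ + 1) * v ^ 2 - 1) / (1 + v ^ 2) ^ 2)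
    (M : ℝ → ℝ) (hM : ∀ v, M v = (1 + v ^ 2) ^ (-γ / 2))
    (η : ℝ) (hη : 0 < η) (l : ℂ)
    (G : ℝ → ℂ)
    (hreg : ContDiffOn ℝ 2 G (Ici 0))
    (hODE : ∀ v : ℝ, 0 ≤ v →
      -(derivWithin (derivWithin G (Ici 0)) (Ici 0) v) + (W v : ℂ) * G v
          + Complex.I * (η : ℂ) * (v : ℂ) * G v
        = l * ((η ^ ((2 : ℝ) / 3) : ℝ) : ℂ) * G v)
    (hGlim : Filter.Tendsto G Filter.atTop (nhds 0))
    (hG'lim : Filter.Tendsto (derivWithin G (Ici 0)) Filter.atTop (nhds 0))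
    (hint : IntegrableOn (fun v : ℝ => (1 + v) * ‖G v‖ * M v) (Ioi 0)) :
    derivWithin G (Ici 0) 0
      = ((η ^ ((2 : ℝ) / 3) : ℝ) : ℂ)
          * ∫ v in Ioi (0 : ℝ),
              (l - Complex.I * ((η ^ ((1 : ℝ) / 3) : ℝ) : ℂ) * (v : ℂ)) * G v * (M v : ℂ) := by
  obtain rfl : M = groundState γ := funext hM
  have hγ0 : 0 < γ := by linarith
  set c : ℂ := ((η ^ ((2 : ℝ) / 3) : ℝ) : ℂ)
  set c' : ℂ := ((η ^ ((1 : ℝ) / 3) : ℝ) : ℂ)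
  have hcc' : c * c' = η := by
    rw [← Complex.ofReal_mul, ← Real.rpow_add hη]
    norm_num
  have hODE' : ∀ v, 0 < v → derivWithin (derivWithin G (Ici 0)) (Ici 0) v
      = W v * G v + -(c * ((l - Complex.I * c' * v) * G v)) := fun v hv => by
    linear_combination -hODE v hv.le - (Complex.I * v * G v) * hcc'
  have hint' : IntegrableOn
      (fun v : ℝ => -(c * ((l - Complex.I * c' * v) * G v)) * groundState γ v) (Ioi 0) := by
    refine IntegrableOn.congr_fun ((integrableOn_Ioi_affine_mul l (Complex.I * c')
      (hreg.continuousOn.mono Ioi_subset_Ici_self) (continuous_groundState γ).continuousOn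
      (groundState_nonneg γ) hint).const_mul c).neg (fun v _ => ?_) measurableSet_Ioi
    simp only [Pi.neg_apply]
    ring
  have hlim := (hG'lim.mul (tendsto_groundState_atTop hγ0).ofReal).sub
    ((tendsto_groundStateDeriv_atTop hγ0).ofReal.mul hGlim)
  rw [derivWithin_Ici_zero_eq_neg_integral hreg (hasDerivAt_groundState γ)
    (fun v => hW v ▸ hasDerivAt_groundStateDeriv γ v) (groundState_zero γ)
    (groundStateDeriv_zero γ) hODE' hint' (by simpa using hlim),
    ← integral_const_mul, ← integral_neg]
  congr 1 with v
  ring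

/-- Flux identity: if `G` solves `−G'' + W G + iηv G = λη^{2/3} G` on `[0,∞)`,
is bounded with bounded derivative, tends to `0` at infinity together with its derivative, and
`∫ (1+v)|G| M < ∞`, then `G'(0) = η^{2/3} ∫₀^∞ (λ − iη^{1/3}v) G(v) M(v) dv`. -/
theorem stmt11
    (γ : ℝ) (hγ : 1 / 2 < γ)
    (W : ℝ → ℝ) (hW : ∀ v, W v = γ * ((γ + 1) * v ^ 2 - 1) / (1 + v ^ 2) ^ 2)
    (M : ℝ → ℝ) (hM : ∀ v, M v = (1 + v ^ 2) ^ (-γ / 2))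
    (η : ℝ) (hη : 0 < η) (l : ℂ)
    (G : ℝ → ℂ)
    (hreg : ContDiffOn ℝ 2 G (Ici 0))
    (hGbdd : ∃ C : ℝ, ∀ v : ℝ, 0 ≤ v → ‖G v‖ ≤ C)
    (hG'bdd : ∃ C : ℝ, ∀ v : ℝ, 0 ≤ v → ‖derivWithin G (Ici 0) v‖ ≤ C)
    (hODE : ∀ v : ℝ, 0 ≤ v →
      -(derivWithin (derivWithin G (Ici 0)) (Ici 0) v) + (W v : ℂ) * G v
          + Complex.I * (η : ℂ) * (v : ℂ) * G v
        = l * ((η ^ ((2 : ℝ) / 3) : ℝ) : ℂ) * G v)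
    (hGlim : Filter.Tendsto G Filter.atTop (nhds 0))
    (hG'lim : Filter.Tendsto (derivWithin G (Ici 0)) Filter.atTop (nhds 0))
    (hint : IntegrableOn (fun v : ℝ => (1 + v) * ‖G v‖ * M v) (Ioi 0)) :
    derivWithin G (Ici 0) 0
      = ((η ^ ((2 : ℝ) / 3) : ℝ) : ℂ)
          * ∫ v in Ioi (0 : ℝ),
              (l - Complex.I * ((η ^ ((1 : ℝ) / 3) : ℝ) : ℂ) * (v : ℂ)) * G v * (M v : ℂ) :=
  stmt11_general γ hγ W hW M hM η hη l G hreg hODE hGlim hG'lim hint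
end

section
/- Let β > 1 and let F(v) = C_β² (1+v²)^{−β/2} with C_β² ∫_ℝ (1+v²)^{−β/2} dv = 1, so that F is a probability density on ℝ. Then there exists a constant C > 0 such that for every bounded continuously differentiable function h : ℝ → ℝ with ∫_ℝ h(v) F(v) dv = 0, one has ∫_ℝ h(v)² F(v) dv ≤ C · ( ∫_ℝ h'(v)² F(v) dv )^{(β−1)/(β+1)} · ( sup_{v∈ℝ} |h(v)| )^{4/(β+1)}. -/
open MeasureTheory Set Filter Topology
open scoped Interval

/-!
Write `D = ∫ h'² F` and `S = sup |h|`. Since `h` has mean zero under the probability density `F`,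
`∫ h² F ≤ ∫ (h - h 0)² F`. Cauchy–Schwarz along `[0, x]`, with the weight `F` in one factor
and `1 / F ≤ 1 / F x` in the other, gives `(h x - h 0)² F x ≤ D |x|`, so the part of
`∫ (h - h 0)² F` over `[-R, R]` is at most `2 D R²`; the part outside is at most
`4 S² ∫_{|v| > R} F = O(S² R^(1-β))` because `F v ≤ C_β² |v|^(-β)`. Balancing the two terms,
`R = (S² / D)^(1/(β+1))`, gives the claim.
-/

theorem sq_integral_abs_le_integral_sq_mul_mul_integral_inv {α : Type*} [MeasurableSpace α]
    {μ : Measure α} {φ w : α → ℝ} (hw : ∀ x, 0 < w x) (hφ : Integrable φ μ)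
    (hφw : Integrable (fun x => φ x ^ 2 * w x) μ)
    (hw_inv : Integrable (fun x => (w x)⁻¹) μ) :
    (∫ x, |φ x| ∂μ) ^ 2 ≤ (∫ x, φ x ^ 2 * w x ∂μ) * ∫ x, (w x)⁻¹ ∂μ := by
  have hquad : ∀ t : ℝ, 0 ≤ (∫ x, φ x ^ 2 * w x ∂μ) * (t * t)
      + (-2 * ∫ x, |φ x| ∂μ) * t + ∫ x, (w x)⁻¹ ∂μ := by
    intro t
    calc 0 ≤ ∫ x, (t * |φ x| * w x - 1) ^ 2 * (w x)⁻¹ ∂μ :=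
          integral_nonneg fun x => by have := hw x; positivity
      _ = ∫ x, (t * t * (φ x ^ 2 * w x) + -2 * t * |φ x| + (w x)⁻¹) ∂μ := by
          congr 1; ext x
          have := (hw x).ne'
          rw [← sq_abs (φ x)]
          field_simp
          ring
      _ = _ := by
          have hsum : Integrable (fun x => t * t * (φ x ^ 2 * w x) + -2 * t * |φ x|) μ :=
            (hφw.const_mul _).add (hφ.abs.const_mul _)
          rw [integral_add hsum hw_inv, integral_add (hφw.const_mul _) (hφ.abs.const_mul _),
            integral_const_mul, integral_const_mul]
          ring
  have := discrim_le_zero hquad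
  rw [discrim] at this
  nlinarith

theorem integral_sub_sq_mul_eq {α : Type*} [MeasurableSpace α] {μ : Measure α}
    {h w : α → ℝ} (hw : Integrable w μ) (hw_one : ∫ x, w x ∂μ = 1)
    (hhw : Integrable (fun x => h x * w x) μ) (hh2w : Integrable (fun x => h x ^ 2 * w x) μ)
    (hmean : ∫ x, h x * w x ∂μ = 0) (c : ℝ) :
    ∫ x, (h x - c) ^ 2 * w x ∂μ = (∫ x, h x ^ 2 * w x ∂μ) + c ^ 2 := by
  have hexp : (fun x => (h x - c) ^ 2 * w x)
      = fun x => h x ^ 2 * w x - 2 * c * (h x * w x) + c ^ 2 * w x := by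
    ext x; ring
  have hdiff : Integrable (fun x => h x ^ 2 * w x - 2 * c * (h x * w x)) μ :=
    hh2w.sub (hhw.const_mul _)
  rw [hexp, integral_add hdiff (hw.const_mul _),
    integral_sub hh2w (hhw.const_mul _), integral_const_mul, integral_const_mul, hmean, hw_one]
  ring

theorem sq_sub_mul_le_integral_mul_abs {w h : ℝ → ℝ} (hw : Continuous w)
    (hw_pos : ∀ v, 0 < w v) (hw_anti : ∀ v x, |v| ≤ |x| → w x ≤ w v)
    (hh : ContDiff ℝ 1 h) (hD : Integrable (fun v => deriv h v ^ 2 * w v)) (x : ℝ) :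
    (h x - h 0) ^ 2 * w x ≤ (∫ v, deriv h v ^ 2 * w v) * |x| := by
  have hh' : Continuous (deriv h) := hh.continuous_deriv le_rfl
  have hw_inv : Continuous fun v => (w v)⁻¹ := hw.inv₀ fun v => (hw_pos v).ne'
  have hftc : h x - h 0 = ∫ v in 0..x, deriv h v :=
    (intervalIntegral.integral_deriv_eq_sub (fun v _ => (hh.differentiable one_ne_zero) v)
      (hh'.intervalIntegrable 0 x)).symm
  have habs : |h x - h 0| ≤ ∫ v in Ι 0 x, |deriv h v| := by
    simpa only [hftc, Real.norm_eq_abs] using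
      intervalIntegral.norm_integral_le_integral_norm_uIoc (f := deriv h) (μ := volume)
  have hcs := sq_integral_abs_le_integral_sq_mul_mul_integral_inv
    (μ := volume.restrict (Ι 0 x)) hw_pos hh'.integrableOn_uIoc hD.integrableOn
    hw_inv.integrableOn_uIoc
  have hinv : ∫ v in Ι 0 x, (w v)⁻¹ ≤ |x| * (w x)⁻¹ := by
    calc ∫ v in Ι 0 x, (w v)⁻¹ ≤ ∫ (_ : ℝ) in Ι 0 x, (w x)⁻¹ := by
          refine setIntegral_mono_on hw_inv.integrableOn_uIoc
            (integrableOn_const (by simp)) measurableSet_uIoc fun v hv => ?_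
          have hvx : |v| ≤ |x| := by
            simpa using abs_sub_left_of_mem_uIcc (uIoc_subset_uIcc hv)
          exact inv_anti₀ (hw_pos x) (hw_anti v x hvx)
      _ = |x| * (w x)⁻¹ := by
          rw [setIntegral_const, measureReal_def, Real.volume_uIoc, sub_zero,
            ENNReal.toReal_ofReal (abs_nonneg x), smul_eq_mul]
  have hrestrict : ∫ v in Ι 0 x, deriv h v ^ 2 * w v ≤ ∫ v, deriv h v ^ 2 * w v :=
    setIntegral_le_integral hD (ae_of_all _ fun v => by have := hw_pos v; positivity)
  have hwx := hw_pos x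
  calc (h x - h 0) ^ 2 * w x ≤ (∫ v in Ι 0 x, |deriv h v|) ^ 2 * w x := by
        rw [← sq_abs]; gcongr
    _ ≤ (∫ v in Ι 0 x, deriv h v ^ 2 * w v) * (∫ v in Ι 0 x, (w v)⁻¹) * w x := by gcongr
    _ ≤ (∫ v, deriv h v ^ 2 * w v) * (|x| * (w x)⁻¹) * w x := by
        have hD0 : 0 ≤ ∫ v, deriv h v ^ 2 * w v :=
          integral_nonneg fun v => by have := hw_pos v; positivity
        have hinv0 : 0 ≤ ∫ v in Ι 0 x, (w v)⁻¹ :=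
          setIntegral_nonneg measurableSet_uIoc fun v _ => (inv_pos.2 (hw_pos v)).le
        gcongr
    _ = (∫ v, deriv h v ^ 2 * w v) * |x| := by field_simp

theorem setIntegral_Ioi_le_of_le_rpow {f : ℝ → ℝ} {c β R : ℝ} (hβ : 1 < β) (hR : 0 < R)
    (hf : IntegrableOn f (Ioi R)) (hbound : ∀ v, R < v → f v ≤ c * v ^ (-β)) :
    ∫ v in Ioi R, f v ≤ c / (β - 1) * R ^ (1 - β) := by
  have hpow : IntegrableOn (fun v : ℝ => c * v ^ (-β)) (Ioi R) :=
    (integrableOn_Ioi_rpow_of_lt (by linarith) hR).const_mul c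
  calc ∫ v in Ioi R, f v ≤ ∫ v in Ioi R, c * v ^ (-β) :=
        setIntegral_mono_on hf hpow measurableSet_Ioi hbound
    _ = c * (-R ^ (-β + 1) / (-β + 1)) := by
        rw [integral_const_mul, integral_Ioi_rpow_of_lt (by linarith) hR]
    _ = c / (β - 1) * R ^ (1 - β) := by
        rw [neg_add_eq_sub, neg_div, ← div_neg, neg_sub]
        ring

theorem setIntegral_compl_Icc_le_of_le_rpow {f : ℝ → ℝ} {c β R : ℝ} (hβ : 1 < β)
    (hR : 0 < R) (hf : Integrable f) (hbound : ∀ v, v ≠ 0 → f v ≤ c * |v| ^ (-β)) :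
    ∫ v in (Icc (-R) R)ᶜ, f v ≤ 2 * c / (β - 1) * R ^ (1 - β) := by
  have hcompl : (Icc (-R) R)ᶜ = Iio (-R) ∪ Ioi R := by
    ext v; simp only [mem_compl_iff, mem_Icc, not_and_or, not_le, mem_union, mem_Iio, mem_Ioi]
  have hdisj : Disjoint (Iio (-R)) (Ioi R) :=
    Set.disjoint_left.mpr fun v hv hv' => by simp only [mem_Iio, mem_Ioi] at hv hv'; linarith
  have hright := setIntegral_Ioi_le_of_le_rpow hβ hR hf.integrableOn fun v hv => by
    simpa [abs_of_pos (hR.trans hv)] using hbound v (hR.trans hv).ne'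
  have hleft : ∫ v in Iio (-R), f v ≤ c / (β - 1) * R ^ (1 - β) := by
    rw [← integral_Iic_eq_integral_Iio, ← integral_comp_neg_Ioi]
    refine setIntegral_Ioi_le_of_le_rpow hβ hR hf.comp_neg.integrableOn fun v hv => ?_
    simpa [abs_of_pos (hR.trans hv)] using hbound (-v) (neg_ne_zero.2 (hR.trans hv).ne')
  rw [hcompl, setIntegral_union hdisj measurableSet_Ioi hf.integrableOn hf.integrableOn,
    mul_div_assoc, mul_assoc]
  linarith

theorem le_of_forall_pos_le_mul_sq_add_mul_rpow {X A B D S β : ℝ} (hβ : 1 < β)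
    (hD : 0 ≤ D) (hS : 0 ≤ S)
    (h : ∀ R, 0 < R → X ≤ A * (D * R ^ 2) + B * (S ^ 2 * R ^ (1 - β))) :
    X ≤ (A + B) * D ^ ((β - 1) / (β + 1)) * S ^ (4 / (β + 1)) := by
  have hθ : (β - 1) / (β + 1) ≠ 0 := (div_pos (by linarith) (by linarith)).ne'
  have hq : 4 / (β + 1) ≠ 0 := (div_pos (by norm_num) (by linarith)).ne'
  rcases hD.eq_or_lt with rfl | hD
  · have hlim :
        Tendsto (fun R => A * (0 * R ^ 2) + B * (S ^ 2 * R ^ (1 - β))) atTop (𝓝 0) := by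
      have := tendsto_rpow_neg_atTop (by linarith : 0 < β - 1)
      rw [neg_sub] at this
      simpa using (this.const_mul (S ^ 2)).const_mul B
    rw [Real.zero_rpow hθ, mul_zero, zero_mul]
    exact ge_of_tendsto hlim ((eventually_gt_atTop 0).mono h)
  rcases hS.eq_or_lt with rfl | hS
  · have hlim :
        Tendsto (fun R => A * (D * R ^ 2) + B * (0 ^ 2 * R ^ (1 - β))) (𝓝[>] 0) (𝓝 0) := by
      have : Continuous fun R : ℝ => A * (D * R ^ 2) := by fun_prop
      simpa using (this.tendsto 0).mono_left nhdsWithin_le_nhds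
    rw [Real.zero_rpow hq, mul_zero]
    exact ge_of_tendsto hlim (eventually_mem_nhdsWithin.mono h)
  -- the value of `R` at which `D R² = S² R^(1-β)`
  set R := (S ^ 2 / D) ^ (β + 1)⁻¹ with hR_def
  have hR : 0 < R := by positivity
  have hlogR : Real.log R = (β + 1)⁻¹ * (2 * Real.log S - Real.log D) := by
    rw [hR_def, Real.log_rpow (by positivity), Real.log_div (by positivity) hD.ne', Real.log_pow]
    norm_num
  set M := D ^ ((β - 1) / (β + 1)) * S ^ (4 / (β + 1))
  have hlogM : Real.log M = (β - 1) / (β + 1) * Real.log D + 4 / (β + 1) * Real.log S := by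
    rw [Real.log_mul (by positivity) (by positivity), Real.log_rpow hD, Real.log_rpow hS]
  have hb : β + 1 ≠ 0 := by linarith
  have hDR : D * R ^ 2 = M := by
    refine Real.log_injOn_pos (by simp; positivity) (by simp; positivity) ?_
    rw [Real.log_mul hD.ne' (by positivity), Real.log_pow, hlogR, hlogM]
    field_simp
    ring
  have hSR : S ^ 2 * R ^ (1 - β) = M := by
    refine Real.log_injOn_pos (by simp; positivity) (by simp; positivity) ?_
    rw [Real.log_mul (by positivity) (by positivity), Real.log_pow, Real.log_rpow hR, hlogR, hlogM]
    field_simp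
    ring
  calc X ≤ A * (D * R ^ 2) + B * (S ^ 2 * R ^ (1 - β)) := h R hR
    _ = (A + B) * M := by rw [hDR, hSR]; ring
    _ = _ := by ring

theorem integrable_sq_mul_of_abs_le {w h : ℝ → ℝ} {S : ℝ} (hw : Integrable w)
    (hh : Continuous h) (hS : ∀ v, |h v| ≤ S) : Integrable (fun v => h v ^ 2 * w v) :=
  hw.bdd_mul (hh.pow 2).aestronglyMeasurable
    (ae_of_all _ fun v => by simpa using sq_le_sq.2 ((hS v).trans (le_abs_self S)))

theorem integral_sq_mul_le_add_rpow {w h : ℝ → ℝ} {c β S R : ℝ} (hβ : 1 < β)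
    (hw : Continuous w) (hw_pos : ∀ v, 0 < w v) (hw_anti : ∀ v x, |v| ≤ |x| → w x ≤ w v)
    (hw_one : ∫ v, w v = 1) (hw_tail : ∀ v, v ≠ 0 → w v ≤ c * |v| ^ (-β))
    (hh : ContDiff ℝ 1 h) (hS : ∀ v, |h v| ≤ S)
    (hD : Integrable (fun v => deriv h v ^ 2 * w v)) (hmean : ∫ v, h v * w v = 0) (hR : 0 < R) :
    ∫ v, h v ^ 2 * w v ≤
      2 * ((∫ v, deriv h v ^ 2 * w v) * R ^ 2) + 8 * c / (β - 1) * (S ^ 2 * R ^ (1 - β)) := by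
  have hw_int : Integrable w := Integrable.of_integral_ne_zero (by rw [hw_one]; exact one_ne_zero)
  have hcont := hh.continuous
  have hdev : ∀ v, |h v - h 0| ≤ 2 * S := fun v =>
    (abs_sub _ _).trans (by linarith [hS v, hS 0])
  have hdevw := integrable_sq_mul_of_abs_le hw_int (hcont.sub continuous_const) hdev
  have hcentre : ∫ v, h v ^ 2 * w v ≤ ∫ v, (h v - h 0) ^ 2 * w v := by
    rw [integral_sub_sq_mul_eq hw_int hw_one
      (hw_int.bdd_mul hcont.aestronglyMeasurable (ae_of_all _ hS))
      (integrable_sq_mul_of_abs_le hw_int hcont hS) hmean]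
    exact le_add_of_nonneg_right (sq_nonneg _)
  set D := ∫ v, deriv h v ^ 2 * w v
  have hD0 : 0 ≤ D := integral_nonneg fun v => by have := hw_pos v; positivity
  have hinner : ∫ v in Icc (-R) R, (h v - h 0) ^ 2 * w v ≤ 2 * (D * R ^ 2) := by
    calc ∫ v in Icc (-R) R, (h v - h 0) ^ 2 * w v ≤ ∫ _ in Icc (-R) R, D * R := by
          refine setIntegral_mono_on hdevw.integrableOn (integrableOn_const (by simp))
            measurableSet_Icc fun x hx => ?_
          refine (sq_sub_mul_le_integral_mul_abs hw hw_pos hw_anti hh hD x).trans ?_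
          gcongr
          exact abs_le.2 hx
      _ = 2 * (D * R ^ 2) := by
          rw [setIntegral_const, Real.volume_real_Icc_of_le (by linarith), smul_eq_mul]
          ring
  have houter : ∫ v in (Icc (-R) R)ᶜ, (h v - h 0) ^ 2 * w v
      ≤ 8 * c / (β - 1) * (S ^ 2 * R ^ (1 - β)) := by
    calc ∫ v in (Icc (-R) R)ᶜ, (h v - h 0) ^ 2 * w v
        ≤ ∫ v in (Icc (-R) R)ᶜ, (2 * S) ^ 2 * w v :=
          setIntegral_mono_on hdevw.integrableOn (hw_int.const_mul _).integrableOn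
            measurableSet_Icc.compl fun v _ => mul_le_mul_of_nonneg_right
              (sq_le_sq.2 ((hdev v).trans (le_abs_self _))) (hw_pos v).le
      _ = (2 * S) ^ 2 * ∫ v in (Icc (-R) R)ᶜ, w v := integral_const_mul _ _
      _ ≤ (2 * S) ^ 2 * (2 * c / (β - 1) * R ^ (1 - β)) := by
          gcongr
          exact setIntegral_compl_Icc_le_of_le_rpow hβ hR hw_int hw_tail
      _ = 8 * c / (β - 1) * (S ^ 2 * R ^ (1 - β)) := by ring
  calc ∫ v, h v ^ 2 * w v ≤ ∫ v, (h v - h 0) ^ 2 * w v := hcentre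
    _ = (∫ v in Icc (-R) R, (h v - h 0) ^ 2 * w v)
        + ∫ v in (Icc (-R) R)ᶜ, (h v - h 0) ^ 2 * w v :=
      (integral_add_compl measurableSet_Icc hdevw).symm
    _ ≤ _ := add_le_add hinner houter

theorem integral_sq_mul_le_nash {w h : ℝ → ℝ} {c β S : ℝ} (hβ : 1 < β)
    (hw : Continuous w) (hw_pos : ∀ v, 0 < w v) (hw_anti : ∀ v x, |v| ≤ |x| → w x ≤ w v)
    (hw_one : ∫ v, w v = 1) (hw_tail : ∀ v, v ≠ 0 → w v ≤ c * |v| ^ (-β))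
    (hh : ContDiff ℝ 1 h) (hS : ∀ v, |h v| ≤ S)
    (hD : Integrable (fun v => deriv h v ^ 2 * w v)) (hmean : ∫ v, h v * w v = 0) :
    ∫ v, h v ^ 2 * w v ≤ (2 + 8 * c / (β - 1)) *
      (∫ v, deriv h v ^ 2 * w v) ^ ((β - 1) / (β + 1)) * S ^ (4 / (β + 1)) :=
  le_of_forall_pos_le_mul_sq_add_mul_rpow hβ
    (integral_nonneg fun v => by have := hw_pos v; positivity) ((abs_nonneg _).trans (hS 0))
    fun _ hR => integral_sq_mul_le_add_rpow hβ hw hw_pos hw_anti hw_one hw_tail hh hS hD hmean hR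

theorem lintegral_sq_mul_le_nash {w h : ℝ → ℝ} {c β : ℝ} (hβ : 1 < β)
    (hw : Continuous w) (hw_pos : ∀ v, 0 < w v) (hw_anti : ∀ v x, |v| ≤ |x| → w x ≤ w v)
    (hw_one : ∫ v, w v = 1) (hw_tail : ∀ v, v ≠ 0 → w v ≤ c * |v| ^ (-β))
    (hh : ContDiff ℝ 1 h) (hbdd : ∃ B, ∀ v, |h v| ≤ B) (hmean : ∫ v, h v * w v = 0) :
    ∫⁻ v, ENNReal.ofReal (h v ^ 2 * w v) ≤ ENNReal.ofReal (2 + 8 * c / (β - 1))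
      * (∫⁻ v, ENNReal.ofReal (deriv h v ^ 2 * w v)) ^ ((β - 1) / (β + 1))
      * (⨆ v, ENNReal.ofReal |h v|) ^ (4 / (β + 1)) := by
  have hC : 0 < 2 + 8 * c / (β - 1) := by
    have hc : 0 < c := by simpa using (hw_pos 1).trans_le (hw_tail 1 one_ne_zero)
    have : 0 < β - 1 := sub_pos.2 hβ
    positivity
  obtain ⟨B, hB⟩ := hbdd
  have hsup_ne_top : (⨆ v, ENNReal.ofReal |h v|) ≠ ⊤ :=
    ne_top_of_le_ne_top ENNReal.ofReal_ne_top (iSup_le fun v => ENNReal.ofReal_le_ofReal (hB v))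
  set S := (⨆ v, ENNReal.ofReal |h v|).toReal
  have hS : ∀ v, |h v| ≤ S := fun v =>
    (ENNReal.ofReal_le_iff_le_toReal hsup_ne_top).1 (le_iSup (fun v => ENNReal.ofReal |h v|) v)
  have hθ : 0 < (β - 1) / (β + 1) := div_pos (by linarith) (by linarith)
  have hq : 0 ≤ 4 / (β + 1) := div_nonneg (by norm_num) (by linarith)
  have hsq_nonneg : ∀ (f : ℝ → ℝ) v, 0 ≤ f v ^ 2 * w v := fun f v => by
    have := hw_pos v; positivity
  rcases eq_top_or_lt_top (∫⁻ v, ENNReal.ofReal (deriv h v ^ 2 * w v)) with hD | hD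
  -- `⊤ * 0 = 0` in `ℝ≥0∞`, so the right-hand side is not `⊤` when `h = 0`
  · rcases eq_or_ne (⨆ v, ENNReal.ofReal |h v|) 0 with hsup | hsup
    · have hzero : ∀ v, h v = 0 := fun v => abs_eq_zero.1 <| le_antisymm
        (ENNReal.ofReal_eq_zero.1 (ENNReal.iSup_eq_zero.1 hsup v)) (abs_nonneg _)
      simp [hzero]
    · rw [hD, ENNReal.top_rpow_of_pos hθ, ENNReal.mul_top (ENNReal.ofReal_pos.2 hC).ne',
        ENNReal.top_mul (ENNReal.rpow_pos (pos_iff_ne_zero.2 hsup) hsup_ne_top).ne']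
      exact le_top
  have hD_int : Integrable (fun v => deriv h v ^ 2 * w v) :=
    ⟨(((hh.continuous_deriv le_rfl).pow 2).mul hw).aestronglyMeasurable,
      (hasFiniteIntegral_iff_ofReal (ae_of_all _ (hsq_nonneg _))).2 hD⟩
  have hh2w := integrable_sq_mul_of_abs_le
    (Integrable.of_integral_ne_zero (by rw [hw_one]; exact one_ne_zero)) hh.continuous hS
  have hD0 : 0 ≤ ∫ v, deriv h v ^ 2 * w v := integral_nonneg (hsq_nonneg _)
  rw [← ofReal_integral_eq_lintegral_ofReal hh2w (ae_of_all _ (hsq_nonneg _)),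
    ← ofReal_integral_eq_lintegral_ofReal hD_int (ae_of_all _ (hsq_nonneg _)),
    ← ENNReal.ofReal_toReal hsup_ne_top,
    ENNReal.ofReal_rpow_of_nonneg hD0 hθ.le,
    ENNReal.ofReal_rpow_of_nonneg ENNReal.toReal_nonneg hq,
    ← ENNReal.ofReal_mul, ← ENNReal.ofReal_mul]
  · exact ENNReal.ofReal_le_ofReal
      (integral_sq_mul_le_nash hβ hw hw_pos hw_anti hw_one hw_tail hh hS hD_int hmean)
  · exact mul_nonneg hC.le (Real.rpow_nonneg hD0 _)
  · exact hC.le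

theorem one_add_sq_rpow_neg_le_of_abs_le {β v x : ℝ} (hβ : 0 ≤ β) (hvx : |v| ≤ |x|) :
    (1 + x ^ 2) ^ (-β / 2) ≤ (1 + v ^ 2) ^ (-β / 2) :=
  Real.rpow_le_rpow_of_nonpos (by positivity) (by linarith [sq_le_sq.2 hvx]) (by linarith)

theorem one_add_sq_rpow_neg_le_abs_rpow {β v : ℝ} (hβ : 0 ≤ β) (hv : v ≠ 0) :
    (1 + v ^ 2) ^ (-β / 2) ≤ |v| ^ (-β) := by
  have habs : |v| ^ (-β) = (v ^ 2) ^ (-β / 2) := by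
    rw [← sq_abs, ← Real.rpow_natCast, ← Real.rpow_mul (abs_nonneg v)]
    ring_nf
  rw [habs]
  exact Real.rpow_le_rpow_of_nonpos (by positivity) (by linarith) (by linarith)

/-- Nash-type inequality for the heavy-tailed probability density
`F(v) = C_β² (1+v²)^{−β/2}`: there is `C > 0` such that for every bounded `C¹` function `h`
with `∫ h F = 0`,
`∫ h² F ≤ C (∫ h'² F)^{(β−1)/(β+1)} (sup |h|)^{4/(β+1)}`
(stated with lower integrals so that both sides make sense even if `∫ h'² F = ∞`). -/
theorem stmt17
    (β : ℝ) (hβ : 1 < β)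
    (Cβ : ℝ) (hCβ : 0 < Cβ)
    (F : ℝ → ℝ) (hF : ∀ v, F v = Cβ ^ 2 * (1 + v ^ 2) ^ (-β / 2))
    (hprob : ∫ v : ℝ, F v = 1) :
    ∃ C : ℝ, 0 < C ∧
      ∀ h : ℝ → ℝ, ContDiff ℝ 1 h → (∃ B : ℝ, ∀ v : ℝ, |h v| ≤ B) →
        (∫ v : ℝ, h v * F v) = 0 →
        (∫⁻ v : ℝ, ENNReal.ofReal (h v ^ 2 * F v))
          ≤ ENNReal.ofReal C
            * (∫⁻ v : ℝ, ENNReal.ofReal (deriv h v ^ 2 * F v)) ^ ((β - 1) / (β + 1))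
            * (⨆ v : ℝ, ENNReal.ofReal |h v|) ^ (4 / (β + 1)) := by
  have hβ0 : 0 ≤ β := by linarith
  have hF_cont : Continuous F := by
    rw [funext hF]
    have hbase : Continuous fun v : ℝ => 1 + v ^ 2 := by fun_prop
    exact continuous_const.mul (hbase.rpow_const fun v => Or.inl (by positivity))
  refine ⟨2 + 8 * Cβ ^ 2 / (β - 1), by have := sub_pos.2 hβ; positivity,
    fun h hh hbdd hmean => lintegral_sq_mul_le_nash hβ hF_cont ?_ ?_ hprob ?_ hh hbdd hmean⟩
  · intro v
    rw [hF]
    positivity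
  · intro v x hvx
    rw [hF, hF]
    exact mul_le_mul_of_nonneg_left (one_add_sq_rpow_neg_le_of_abs_le hβ0 hvx) (by positivity)
  · intro v hv
    rw [hF]
    exact mul_le_mul_of_nonneg_left (one_add_sq_rpow_neg_le_abs_rpow hβ0 hv) (by positivity)
end

section
/- Define f(μ) = cos(πμ/2) · Γ(1−μ)/Γ(1+μ) for real μ. Then f(μ) > 0 for every μ ∈ (2/3, 2) with μ ≠ 1, the limit lim_{μ→1} f(μ) exists and equals π/2, and lim_{μ→2⁻} f(μ) = +∞. -/
/-!
Away from the integers, the reflection formula `Γ(μ) Γ(1 - μ) = π / sin(πμ)`, the duplication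
`sin(πμ) = 2 sin(πμ/2) cos(πμ/2)` and `Γ(1 + μ) = μ Γ(μ)` turn `f(μ)` into
`π / (2 μ sin(πμ/2) Γ(μ)²)`, in which the factor `cos(πμ/2)` has cancelled. On `(0, 2)` the
denominator is positive and continuous; it equals `2` at `μ = 1` and tends to `0⁺` as `μ → 2⁻`
because `sin π = 0`.
-/

open Set Filter Topology Real

lemma Real.sin_pi_mul_ne_zero {μ : ℝ} (hμ : ∀ n : ℤ, μ ≠ n) : sin (π * μ) ≠ 0 := by
  rw [Ne, sin_eq_zero_iff]
  rintro ⟨n, hn⟩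
  exact hμ n (mul_right_cancel₀ pi_ne_zero (by linarith))

lemma Real.cos_mul_Gamma_one_sub_div_Gamma_one_add {μ : ℝ} (hμ : ∀ n : ℤ, μ ≠ n) :
    cos (π * μ / 2) * (Gamma (1 - μ) / Gamma (1 + μ)) =
      π / (2 * μ * sin (π * μ / 2) * Gamma μ ^ 2) := by
  have hsin : sin (π * μ) ≠ 0 := sin_pi_mul_ne_zero hμ
  have hsin_double : sin (π * μ) = 2 * sin (π * μ / 2) * cos (π * μ / 2) := by
    rw [← sin_two_mul]; ring_nf
  have hhalf : sin (π * μ / 2) ≠ 0 ∧ cos (π * μ / 2) ≠ 0 := by simpa [hsin_double] using hsin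
  have hμ0 : μ ≠ 0 := by exact_mod_cast hμ 0
  have hΓ : Gamma μ ≠ 0 := Gamma_ne_zero fun m => by exact_mod_cast hμ (-m)
  have hreflection : Gamma (1 - μ) = π / (sin (π * μ) * Gamma μ) := by
    have h := Gamma_mul_Gamma_one_sub μ
    rw [eq_div_iff hsin] at h
    rw [eq_div_iff (mul_ne_zero hsin hΓ)]
    linear_combination h
  rw [hreflection, hsin_double, add_comm, Gamma_add_one hμ0]
  field_simp [hhalf.1, hhalf.2]

lemma ne_intCast_of_mem_Ioo_zero_two {μ : ℝ} (hμ : μ ∈ Ioo (0 : ℝ) 2) (h1 : μ ≠ 1) :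
    ∀ n : ℤ, μ ≠ n := by
  rintro n rfl
  have h0 : (0 : ℤ) < n := by exact_mod_cast hμ.1
  have h2 : n < 2 := by exact_mod_cast hμ.2
  exact h1 (by simp [show n = 1 by omega])

lemma Real.sin_pi_mul_div_two_pos {μ : ℝ} (hμ : μ ∈ Ioo (0 : ℝ) 2) : 0 < sin (π * μ / 2) := by
  apply sin_pos_of_pos_of_lt_pi <;> nlinarith [pi_pos, hμ.1, hμ.2]

lemma mul_sin_mul_Gamma_sq_pos {μ : ℝ} (hμ : μ ∈ Ioo (0 : ℝ) 2) :
    0 < 2 * μ * sin (π * μ / 2) * Gamma μ ^ 2 := by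
  have := sin_pi_mul_div_two_pos hμ
  have := Gamma_pos_of_pos hμ.1
  have := hμ.1
  positivity

lemma continuousAt_mul_sin_mul_Gamma_sq {s : ℝ} (hs : 0 < s) :
    ContinuousAt (fun μ => 2 * μ * sin (π * μ / 2) * Gamma μ ^ 2) s := by
  have hΓ : ContinuousAt Gamma s :=
    (differentiableAt_Gamma fun m => by linarith [(m.cast_nonneg : (0 : ℝ) ≤ m)]).continuousAt
  fun_prop

lemma tendsto_pi_div_mul_sin_mul_Gamma_sq_nhdsLT_two :
    Tendsto (fun μ => π / (2 * μ * sin (π * μ / 2) * Gamma μ ^ 2)) (𝓝[<] 2) atTop := by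
  have hdenom : Tendsto (fun μ => 2 * μ * sin (π * μ / 2) * Gamma μ ^ 2) (𝓝[<] 2) (𝓝[>] 0) := by
    refine tendsto_nhdsWithin_iff.mpr ⟨?_, ?_⟩
    · simpa [sin_pi] using (continuousAt_mul_sin_mul_Gamma_sq two_pos).continuousWithinAt.tendsto
    · filter_upwards [Ioo_mem_nhdsLT two_pos] with μ hμ using mul_sin_mul_Gamma_sq_pos hμ
  simpa [div_eq_mul_inv] using (tendsto_inv_nhdsGT_zero.comp hdenom).const_mul_atTop pi_pos

/-- For `f(μ) = cos(πμ/2) Γ(1−μ)/Γ(1+μ)`: `f > 0` on `(2/3,2) \ {1}`,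
`f(μ) → π/2` as `μ → 1`, and `f(μ) → +∞` as `μ → 2⁻`. -/
theorem stmt18
    (f : ℝ → ℝ)
    (hf : ∀ μ : ℝ, f μ = Real.cos (Real.pi * μ / 2) * (Real.Gamma (1 - μ) / Real.Gamma (1 + μ))) :
    (∀ μ ∈ Ioo (2 / 3 : ℝ) 2, μ ≠ 1 → 0 < f μ)
    ∧ Tendsto f (nhdsWithin 1 {(1 : ℝ)}ᶜ) (nhds (Real.pi / 2))
    ∧ Tendsto f (nhdsWithin 2 (Iio 2)) atTop := by
  let g : ℝ → ℝ := fun μ => π / (2 * μ * sin (π * μ / 2) * Gamma μ ^ 2)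
  have hfg : ∀ μ ∈ Ioo (0 : ℝ) 2, μ ≠ 1 → f μ = g μ := fun μ hμ h1 => by
    rw [hf, cos_mul_Gamma_one_sub_div_Gamma_one_add (ne_intCast_of_mem_Ioo_zero_two hμ h1)]
  refine ⟨fun μ hμ h1 => ?_, ?_, ?_⟩
  · have hμ0 : μ ∈ Ioo (0 : ℝ) 2 := ⟨by linarith [hμ.1], hμ.2⟩
    rw [hfg μ hμ0 h1]
    exact div_pos pi_pos (mul_sin_mul_Gamma_sq_pos hμ0)
  · have hg1 : g 1 = π / 2 := by simp [g, sin_pi_div_two]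
    have hcont : ContinuousAt g 1 :=
      continuousAt_const.div (continuousAt_mul_sin_mul_Gamma_sq one_pos) (by simp)
    refine (hg1 ▸ hcont.continuousWithinAt.tendsto).congr' ?_
    filter_upwards [nhdsWithin_le_nhds (Ioo_mem_nhds one_pos one_lt_two), self_mem_nhdsWithin]
      with μ hμ h1
    exact (hfg μ hμ h1).symm
  · refine tendsto_pi_div_mul_sin_mul_Gamma_sq_nhdsLT_two.congr' ?_
    filter_upwards [Ioo_mem_nhdsLT one_lt_two] with μ hμ
    exact (hfg μ ⟨by linarith [hμ.1], hμ.2⟩ hμ.1.ne').symm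
end
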